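/- arXiv:1306.4416 — 9 statements merged into one kernel-verified Lean document; each statement's English description precedes it below -/
import Mathlib

section
/- Let A, B be nonnegative real numbers with B ≤ A. Then the function Δ(τ₁, τ₂, α, β) = (1−α)·(−(A−B)(τ₂−τ₁)) − (1−(A−B)τ₁)·(−1−β), minimized over 0 ≤ τ₁ ≤ τ₂ ≤ 1, −B·τ₁ ≤ α ≤ A·τ₁, −B·(τ₂−τ₁) ≤ β ≤ A·(τ₂−τ₁), is positive if and only if A < 1. -/
/-!
`Δ` is affine and nondecreasing in `α` and in `β` (both slopes are nonnegative once
`(A - B) τ₁ < 1`), so over the admissible box it is smallest at `α = -B τ₁`,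
`β = -B (τ₂ - τ₁)`, where it collapses to `1 - A τ₂ + B τ₁`. Minimising this over
`0 ≤ τ₁ ≤ τ₂ ≤ 1` gives `1 - A`, attained at `τ₁ = 0`, `τ₂ = 1`.
-/

def cauchyDet (A B τ₁ τ₂ α β : ℝ) : ℝ :=
  (1 - α) * (-(A - B) * (τ₂ - τ₁)) - (1 - (A - B) * τ₁) * (-1 - β)

theorem cauchyDet_lowerCorner (A B τ₁ τ₂ : ℝ) :
    cauchyDet A B τ₁ τ₂ (-B * τ₁) (-B * (τ₂ - τ₁)) = 1 - A * τ₂ + B * τ₁ := by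
  unfold cauchyDet
  ring

theorem cauchyDet_mono {A B τ₁ τ₂ α α' β β' : ℝ}
    (hα_slope : 0 ≤ (A - B) * (τ₂ - τ₁)) (hβ_slope : 0 ≤ 1 - (A - B) * τ₁)
    (hα : α' ≤ α) (hβ : β' ≤ β) :
    cauchyDet A B τ₁ τ₂ α' β' ≤ cauchyDet A B τ₁ τ₂ α β := by
  have hdiff : cauchyDet A B τ₁ τ₂ α β - cauchyDet A B τ₁ τ₂ α' β' =
      (α - α') * ((A - B) * (τ₂ - τ₁)) + (1 - (A - B) * τ₁) * (β - β') := by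
    unfold cauchyDet
    ring
  have : 0 ≤ (α - α') * ((A - B) * (τ₂ - τ₁)) + (1 - (A - B) * τ₁) * (β - β') :=
    add_nonneg (mul_nonneg (sub_nonneg.2 hα) hα_slope) (mul_nonneg hβ_slope (sub_nonneg.2 hβ))
  linarith

theorem stmt_0_general (A B : ℝ) (hB : 0 ≤ B) (hBA : B ≤ A) :
    (∀ τ₁ τ₂ α β : ℝ, 0 ≤ τ₁ → τ₁ ≤ τ₂ → τ₂ ≤ 1 →
      -B * τ₁ ≤ α → α ≤ A * τ₁ →
      -B * (τ₂ - τ₁) ≤ β → β ≤ A * (τ₂ - τ₁) →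
      0 < (1 - α) * (-(A - B) * (τ₂ - τ₁)) - (1 - (A - B) * τ₁) * (-1 - β))
    ↔ A < 1 := by
  constructor
  · intro h
    have h01 : 0 < cauchyDet A B 0 1 (-B * 0) (-B * (1 - 0)) :=
      h 0 1 _ _ le_rfl zero_le_one le_rfl le_rfl (by simp) le_rfl (by linarith)
    rw [cauchyDet_lowerCorner] at h01
    linarith
  · intro hA1 τ₁ τ₂ α β hτ₁ hτ₁₂ hτ₂ hα _ hβ _
    have hAB : 0 ≤ A - B := sub_nonneg.2 hBA
    show 0 < cauchyDet A B τ₁ τ₂ α β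
    calc 0 < 1 - A * τ₂ + B * τ₁ := by nlinarith
      _ = cauchyDet A B τ₁ τ₂ (-B * τ₁) (-B * (τ₂ - τ₁)) := (cauchyDet_lowerCorner ..).symm
      _ ≤ cauchyDet A B τ₁ τ₂ α β :=
        cauchyDet_mono (mul_nonneg hAB (by linarith)) (by nlinarith) hα hβ

/-- For `B ≤ A` nonnegative, the determinant `Δ` is positive over the whole
admissible parameter set iff `A < 1`. -/
theorem stmt_0 (A B : ℝ) (hA : 0 ≤ A) (hB : 0 ≤ B) (hBA : B ≤ A) :
    (∀ τ₁ τ₂ α β : ℝ, 0 ≤ τ₁ → τ₁ ≤ τ₂ → τ₂ ≤ 1 →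
      -B * τ₁ ≤ α → α ≤ A * τ₁ →
      -B * (τ₂ - τ₁) ≤ β → β ≤ A * (τ₂ - τ₁) →
      0 < (1 - α) * (-(A - B) * (τ₂ - τ₁)) - (1 - (A - B) * τ₁) * (-1 - β))
    ↔ A < 1 :=
  stmt_0_general A B hB hBA
end

section
/- Let A, B be nonnegative real numbers. The inequality (B² − A²)·t² + (A² − B² + B)·t + 1 − A > 0 holds for all t ∈ [0,1] if and only if both of the following hold: (i) A < 1, and (ii) if B > (1 + √(1 + 4A²))/2 then (2B − A)² − A² − (B² − A² − B + 2A)² > 0. -/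
/-!
Write the polynomial as `a t² + b t + c` with `a = B² - A²`, `b = A² - B² + B`, `c = 1 - A`; the
quantity in (ii) is `-discrim a b c`, and the hypothesis of (ii) says `A² < B² - B`, i.e. `b < 0`.
If `b ≥ 0` the quadratic is bounded below on `[0, 1]` by its values `1 - A` and `1 - A + B` at
the endpoints. If `b < 0` then `a > B ≥ 0` and the vertex `-b / 2a` lies in `[0, 1]`, so positivity
on `[0, 1]` is positivity at the vertex, i.e. a negative discriminant.
-/

open Set

section Quadratic

variable {K : Type*} [Field K] [LinearOrder K] [IsStrictOrderedRing K] {a b c : K}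

theorem quadratic_pos_of_discrim_neg (ha : 0 < a) (h : discrim a b c < 0) (t : K) :
    0 < a * t ^ 2 + b * t + c := by
  have hsq : 4 * a * (a * t ^ 2 + b * t + c) = (2 * a * t + b) ^ 2 - discrim a b c := by
    unfold discrim; ring
  have : 0 < 4 * a * (a * t ^ 2 + b * t + c) := by
    rw [hsq]; linarith [sq_nonneg (2 * a * t + b)]
  exact pos_of_mul_pos_right this (by positivity)

theorem forall_mem_Icc_quadratic_pos_iff_discrim_neg (ha : 0 < a) (hb : b ≤ 0)
    (hb' : -b ≤ 2 * a) :
    (∀ t ∈ Icc (0 : K) 1, 0 < a * t ^ 2 + b * t + c) ↔ discrim a b c < 0 := by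
  refine ⟨fun h => ?_, fun h t _ => quadratic_pos_of_discrim_neg ha h t⟩
  have hvertex : -b / (2 * a) ∈ Icc (0 : K) 1 :=
    ⟨div_nonneg (neg_nonneg.2 hb) (by positivity), (div_le_one (by positivity)).2 hb'⟩
  have hval : a * (-b / (2 * a)) ^ 2 + b * (-b / (2 * a)) + c = -discrim a b c / (4 * a) := by
    unfold discrim; field_simp; ring
  have := h _ hvertex
  rw [hval, div_pos_iff_of_pos_right (by positivity)] at this
  linarith

theorem min_le_quadratic_of_nonneg (hb : 0 ≤ b) {t : K} (ht : t ∈ Icc (0 : K) 1) :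
    min c (a + b + c) ≤ a * t ^ 2 + b * t + c := by
  obtain ⟨ht0, ht1⟩ := ht
  rcases le_total 0 a with ha | ha
  · exact (min_le_left _ _).trans (by nlinarith [mul_nonneg ha (sq_nonneg t)])
  · -- a concave quadratic lies above its chord: the gap is `-a t (1 - t)`
    have hchord : (1 - t) * c + t * (a + b + c) ≤ a * t ^ 2 + b * t + c := by
      nlinarith [mul_nonneg (neg_nonneg.2 ha) (mul_nonneg ht0 (sub_nonneg.2 ht1))]
    refine le_trans ?_ hchord
    nlinarith [min_le_left c (a + b + c), min_le_right c (a + b + c)]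

end Quadratic

theorem half_one_add_sqrt_lt_iff {x y : ℝ} (hx : 0 ≤ x) (hy : 0 ≤ y) :
    (1 + √(1 + 4 * x)) / 2 < y ↔ x < y ^ 2 - y := by
  have hsqrt : 1 ≤ √(1 + 4 * x) := Real.one_le_sqrt.2 (by linarith)
  constructor
  · intro h
    have := (Real.sqrt_lt' (by linarith)).1 (show √(1 + 4 * x) < 2 * y - 1 by linarith)
    nlinarith
  · intro h
    have hy1 : 1 < y := by nlinarith
    have := (Real.sqrt_lt' (by linarith)).2 (show 1 + 4 * x < (2 * y - 1) ^ 2 by nlinarith)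
    linarith

theorem stmt_1_general (A B : ℝ) (hB : 0 ≤ B) :
    (∀ t ∈ Set.Icc (0:ℝ) 1,
        0 < (B^2 - A^2) * t^2 + (A^2 - B^2 + B) * t + 1 - A)
    ↔ (A < 1 ∧
        (B > (1 + Real.sqrt (1 + 4 * A^2)) / 2 →
          (2*B - A)^2 - A^2 - (B^2 - A^2 - B + 2*A)^2 > 0)) := by
  have hpoly : ∀ t : ℝ, (B^2 - A^2) * t^2 + (A^2 - B^2 + B) * t + 1 - A
      = (B^2 - A^2) * t^2 + (A^2 - B^2 + B) * t + (1 - A) := fun t => by ring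
  have hdiscrim : (2*B - A)^2 - A^2 - (B^2 - A^2 - B + 2*A)^2
      = -discrim (B^2 - A^2) (A^2 - B^2 + B) (1 - A) := by
    unfold discrim; ring
  simp only [hpoly, hdiscrim, gt_iff_lt, neg_pos, half_one_add_sqrt_lt_iff (sq_nonneg A) hB]
  constructor
  · intro hpos
    have hA1 : A < 1 := by simpa using hpos 0 (by simp)
    exact ⟨hA1, fun hBA => (forall_mem_Icc_quadratic_pos_iff_discrim_neg (by linarith)
      (by linarith) (by linarith)).1 hpos⟩
  · rintro ⟨hA1, hdisc⟩ t ht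
    by_cases hBA : A ^ 2 < B ^ 2 - B
    · exact quadratic_pos_of_discrim_neg (by linarith) (hdisc hBA) t
    · have hb : 0 ≤ A ^ 2 - B ^ 2 + B := by linarith [not_lt.1 hBA]
      exact (lt_min (by linarith) (by linarith)).trans_le (min_le_quadratic_of_nonneg hb ht)

theorem stmt_1 (A B : ℝ) (hA : 0 ≤ A) (hB : 0 ≤ B) :
    (∀ t ∈ Set.Icc (0:ℝ) 1,
        0 < (B^2 - A^2) * t^2 + (A^2 - B^2 + B) * t + 1 - A)
    ↔ (A < 1 ∧
        (B > (1 + Real.sqrt (1 + 4 * A^2)) / 2 →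
          (2*B - A)^2 - A^2 - (B^2 - A^2 - B + 2*A)^2 > 0)) :=
  stmt_1_general A B hB
end

section
/- Let A, B be nonnegative real numbers with A < B ≤ (1 + √(1 + 4A²))/2 and A < 1. Then for all t ∈ [0,1], (B² − A²)·t² + (A² − B² + B)·t + 1 − A > 0. -/
theorem stmt_2 (A B : ℝ) (hA : 0 ≤ A) (hB : 0 ≤ B)
    (hAB : A < B) (hBle : B ≤ (1 + Real.sqrt (1 + 4 * A^2)) / 2) (hA1 : A < 1) :
    ∀ t ∈ Set.Icc (0:ℝ) 1,
      0 < (B^2 - A^2) * t^2 + (A^2 - B^2 + B) * t + 1 - A := by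
  intro t ht
  obtain ⟨ht0, ht1⟩ := ht
  have hs : Real.sqrt (1 + 4 * A^2) ^ 2 = 1 + 4 * A^2 :=
    Real.sq_sqrt (by positivity)
  have hsnn : 0 ≤ Real.sqrt (1 + 4 * A^2) := Real.sqrt_nonneg _
  have hkey : 0 ≤ A^2 - B^2 + B := by
    rcases le_or_gt B (1/2) with h | h
    · nlinarith
    · nlinarith [sq_nonneg (Real.sqrt (1 + 4 * A^2) - (2*B - 1))]
  have hlead : 0 ≤ B^2 - A^2 := by nlinarith
  nlinarith [mul_nonneg hlead (sq_nonneg t), mul_nonneg hkey ht0]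
end

section
/- Let A, B be nonnegative real numbers satisfying A < 1 and B < 1 + 2√(1 − A). Then for all t ∈ [0,1], (B² − A²)·t² + (A² − B² + B)·t + 1 − A > 0. -/
/-!
Write `s = √(1 - A)`, so `A = 1 - s²` with `s > 0`. After multiplication by `1 + 2s`, the
quadratic becomes the sum of `(B (1 + 2s - B) + A²) t (1 - t) (1 + 2s)`, `B ((1 + 2s) t - s)²`
and `s² (1 + 2s - B)`. For `t ∈ [0, 1]` and `0 ≤ B < 1 + 2s` the first two terms are
nonnegative and the last is positive.
-/

theorem mul_quadratic_eq_sum_of_sq_eq {A B s : ℝ} (hsA : s ^ 2 = 1 - A) (t : ℝ) :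
    (1 + 2 * s) * ((B ^ 2 - A ^ 2) * t ^ 2 + (A ^ 2 - B ^ 2 + B) * t + 1 - A) =
      (B * (1 + 2 * s - B) + A ^ 2) * (t * (1 - t)) * (1 + 2 * s)
        + B * ((1 + 2 * s) * t - s) ^ 2 + s ^ 2 * (1 + 2 * s - B) := by
  linear_combination -(1 + 2 * s) * hsA

theorem quadratic_pos_of_sq_eq {A B s t : ℝ} (hs : 0 < s) (hsA : s ^ 2 = 1 - A)
    (hB : 0 ≤ B) (hBs : B < 1 + 2 * s) (ht0 : 0 ≤ t) (ht1 : t ≤ 1) :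
    0 < (B ^ 2 - A ^ 2) * t ^ 2 + (A ^ 2 - B ^ 2 + B) * t + 1 - A := by
  have hgap : 0 < 1 + 2 * s - B := sub_pos.mpr hBs
  have hsum : 0 < (B * (1 + 2 * s - B) + A ^ 2) * (t * (1 - t)) * (1 + 2 * s)
      + B * ((1 + 2 * s) * t - s) ^ 2 + s ^ 2 * (1 + 2 * s - B) := by
    have h₁ : 0 ≤ (B * (1 + 2 * s - B) + A ^ 2) * (t * (1 - t)) * (1 + 2 * s) := by
      have : 0 ≤ t * (1 - t) := mul_nonneg ht0 (sub_nonneg.mpr ht1)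
      positivity
    have h₂ : 0 ≤ B * ((1 + 2 * s) * t - s) ^ 2 := by positivity
    have h₃ : 0 < s ^ 2 * (1 + 2 * s - B) := by positivity
    linarith
  rw [← mul_quadratic_eq_sum_of_sq_eq hsA] at hsum
  exact pos_of_mul_pos_right hsum (by positivity)

theorem stmt_4_general (A B : ℝ) (hB : 0 ≤ B)
    (hA1 : A < 1) (hB1 : B < 1 + 2 * Real.sqrt (1 - A)) :
    ∀ t ∈ Set.Icc (0:ℝ) 1,
      0 < (B^2 - A^2) * t^2 + (A^2 - B^2 + B) * t + 1 - A := by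
  rintro t ⟨ht0, ht1⟩
  have hA1' : 0 < 1 - A := sub_pos.mpr hA1
  exact quadratic_pos_of_sq_eq (Real.sqrt_pos.mpr hA1') (Real.sq_sqrt hA1'.le) hB hB1 ht0 ht1

theorem stmt_4 (A B : ℝ) (hA : 0 ≤ A) (hB : 0 ≤ B)
    (hA1 : A < 1) (hB1 : B < 1 + 2 * Real.sqrt (1 - A)) :
    ∀ t ∈ Set.Icc (0:ℝ) 1,
      0 < (B^2 - A^2) * t^2 + (A^2 - B^2 + B) * t + 1 - A :=
  stmt_4_general A B hB hA1 hB1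
end

section
/- Let A = 0 and let B ≥ 0. Then the inequality B²·t² + (−B² + B)·t + 1 > 0 holds for all t ∈ [0,1] if and only if B < 3. -/
/-!
Completing the square gives `4 Q(t) = (2Bt + 1 - B)² + (3 - B)(1 + B)`. For `0 ≤ B < 3` the
constant term is positive, so `Q > 0` on all of `ℝ`; for `B ≥ 3` the vertex `t = (B - 1) / (2B)`
lies in `[0, 1]` and `Q` is nonpositive there.
-/

/-- The criterion `Q(t) = (B² - A²)t² + (A² - B² + B)t + (1 - A)` at `A = 0`. -/
def quadCriterion (B t : ℝ) : ℝ := B ^ 2 * t ^ 2 + (-B ^ 2 + B) * t + 1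

lemma four_mul_quadCriterion (B t : ℝ) :
    4 * quadCriterion B t = (2 * B * t + 1 - B) ^ 2 + (3 - B) * (1 + B) := by
  unfold quadCriterion; ring

lemma quadCriterion_pos {B : ℝ} (hB : -1 < B) (h3 : B < 3) (t : ℝ) : 0 < quadCriterion B t := by
  have hconst : 0 < (3 - B) * (1 + B) := mul_pos (by linarith) (by linarith)
  have := four_mul_quadCriterion B t
  nlinarith [sq_nonneg (2 * B * t + 1 - B)]

lemma quadCriterion_vertex {B : ℝ} (hB : B ≠ 0) :
    quadCriterion B ((B - 1) / (2 * B)) = (3 - B) * (1 + B) / 4 := by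
  have hsq : 2 * B * ((B - 1) / (2 * B)) + 1 - B = 0 := by field_simp; ring
  have h4 := four_mul_quadCriterion B ((B - 1) / (2 * B))
  rw [hsq] at h4
  linarith

lemma vertex_mem_Icc {B : ℝ} (hB : 1 ≤ B) : (B - 1) / (2 * B) ∈ Set.Icc (0 : ℝ) 1 := by
  refine ⟨div_nonneg (by linarith) (by linarith), ?_⟩
  rw [div_le_one (by linarith)]
  linarith

theorem stmt_6 (B : ℝ) (hB : 0 ≤ B) :
    (∀ t ∈ Set.Icc (0:ℝ) 1, 0 < B^2 * t^2 + (-B^2 + B) * t + 1) ↔ B < 3 := by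
  change (∀ t ∈ Set.Icc (0:ℝ) 1, 0 < quadCriterion B t) ↔ B < 3
  refine ⟨fun h => ?_, fun h3 t _ => quadCriterion_pos (by linarith) h3 t⟩
  by_contra! h3
  have hpos := h _ (vertex_mem_Icc (by linarith))
  rw [quadCriterion_vertex (by linarith)] at hpos
  nlinarith
end

section
/- Let A, B ≥ 0 with A < 1 and suppose B < min over t ∈ (0,1) of (t + √((2t(1−t)A − 1)² + (1−t)(3t−1))) / (2t(1−t)). Then for all t ∈ [0,1], (B² − A²)·t² + (A² − B² + B)·t + 1 − A > 0. Conversely, if the quadratic inequality holds for all t ∈ [0,1] and A < 1, then B < (t + √((2t(1−t)A − 1)² + (1−t)(3t−1))) / (2t(1−t)) for every t ∈ (0,1). -/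
lemma aux_7 (A B t : ℝ) (hA : 0 ≤ A) (hB : 0 ≤ B) (hA1 : A < 1)
    (ht0 : 0 < t) (ht1 : t < 1) :
    B < (t + Real.sqrt ((2*t*(1 - t)*A - 1)^2 + (1 - t)*(3*t - 1))) / (2*t*(1 - t)) ↔
      0 < (B^2 - A^2) * t^2 + (A^2 - B^2 + B) * t + 1 - A := by
  have hd : 0 < 2*t*(1 - t) := by nlinarith
  have hc : 0 < A^2*t*(1 - t) + 1 - A := by
    nlinarith [mul_nonneg (mul_nonneg (sq_nonneg A) ht0.le) (by linarith : (0:ℝ) ≤ 1 - t)]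
  have hDnn : 0 ≤ (2*t*(1 - t)*A - 1)^2 + (1 - t)*(3*t - 1) := by
    nlinarith [sq_nonneg t, mul_pos hd hc]
  have hs := Real.sq_sqrt hDnn
  have hsn := Real.sqrt_nonneg ((2*t*(1 - t)*A - 1)^2 + (1 - t)*(3*t - 1))
  rw [lt_div_iff₀ hd]
  set s := Real.sqrt ((2*t*(1 - t)*A - 1)^2 + (1 - t)*(3*t - 1)) with hsdef
  constructor
  · intro h
    rcases le_or_gt (2*t*(1 - t)*B) t with hc | hc
    · nlinarith
    · nlinarith [sq_nonneg (2*t*(1-t)*B - t - s), mul_pos hd (sub_pos.mpr h)]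
  · intro h
    by_contra hle
    push_neg at hle
    nlinarith [mul_pos hd h, sq_nonneg (2*t*(1-t)*B - t + s)]

theorem stmt_7 (A B : ℝ) (hA : 0 ≤ A) (hB : 0 ≤ B) (hA1 : A < 1) :
    (B < sInf ((fun t : ℝ =>
        (t + Real.sqrt ((2*t*(1 - t)*A - 1)^2 + (1 - t)*(3*t - 1))) /
          (2*t*(1 - t))) '' Set.Ioo 0 1) →
      ∀ t ∈ Set.Icc (0:ℝ) 1,
        0 < (B^2 - A^2) * t^2 + (A^2 - B^2 + B) * t + 1 - A) ∧
    ((∀ t ∈ Set.Icc (0:ℝ) 1,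
        0 < (B^2 - A^2) * t^2 + (A^2 - B^2 + B) * t + 1 - A) →
      ∀ t ∈ Set.Ioo (0:ℝ) 1,
        B < (t + Real.sqrt ((2*t*(1 - t)*A - 1)^2 + (1 - t)*(3*t - 1))) /
          (2*t*(1 - t))) := by
  constructor
  · intro hinf t ht
    obtain ⟨ht0, ht1⟩ := ht
    rcases eq_or_lt_of_le ht0 with h0 | h0
    · rw [← h0]; norm_num; linarith
    rcases eq_or_lt_of_le ht1 with h1 | h1
    · rw [h1]; ring_nf; nlinarith
    have hbdd : BddBelow ((fun t : ℝ =>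
        (t + Real.sqrt ((2*t*(1 - t)*A - 1)^2 + (1 - t)*(3*t - 1))) /
          (2*t*(1 - t))) '' Set.Ioo 0 1) := by
      refine ⟨0, ?_⟩
      rintro x ⟨s, ⟨hs0, hs1⟩, rfl⟩
      have : 0 < 2*s*(1 - s) := by nlinarith
      positivity
    have hle : sInf ((fun t : ℝ =>
        (t + Real.sqrt ((2*t*(1 - t)*A - 1)^2 + (1 - t)*(3*t - 1))) /
          (2*t*(1 - t))) '' Set.Ioo 0 1) ≤
        (t + Real.sqrt ((2*t*(1 - t)*A - 1)^2 + (1 - t)*(3*t - 1))) / (2*t*(1 - t)) :=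
      csInf_le hbdd ⟨t, ⟨h0, h1⟩, rfl⟩
    exact (aux_7 A B t hA hB hA1 h0 h1).mp (lt_of_lt_of_le hinf hle)
  · intro hq t ht
    exact (aux_7 A B t hA hB hA1 ht.1 ht.2).mpr (hq t ⟨ht.1.le, ht.2.le⟩)
end

section
/- Let A, B ≥ 0 with 0 ≤ B ≤ (1 + √5)/2 and A < 1. Then for all t ∈ [0,1], (B² − A²)·t² + (A² − B² + B)·t + 1 − A > 0. -/
theorem stmt_8 (A B : ℝ) (hA : 0 ≤ A) (hB : 0 ≤ B)
    (hBle : B ≤ (1 + Real.sqrt 5) / 2) (hA1 : A < 1) :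
    ∀ t ∈ Set.Icc (0:ℝ) 1,
      0 < (B^2 - A^2) * t^2 + (A^2 - B^2 + B) * t + 1 - A := by
  have h5 : (Real.sqrt 5) ^ 2 = 5 := Real.sq_sqrt (by norm_num)
  have hs : 0 ≤ Real.sqrt 5 := Real.sqrt_nonneg 5
  have hs1 : (1:ℝ) ≤ Real.sqrt 5 := by nlinarith
  have hB2 : B ^ 2 ≤ B + 1 := by
    nlinarith [mul_nonneg (sub_nonneg.mpr hBle) (by nlinarith : (0:ℝ) ≤ B - (1 - Real.sqrt 5)/2)]
  rintro t ⟨ht0, ht1⟩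
  rcases le_or_gt (B^2 - A^2) 0 with hc | hc
  · nlinarith [mul_nonneg ht0 (sub_nonneg.mpr ht1), mul_nonneg hB ht0,
      mul_nonpos_of_nonpos_of_nonneg hc (mul_nonneg ht0 (sub_nonneg.mpr ht1))]
  · rcases le_or_gt (B^2 - A^2) B with hcb | hcb
    · nlinarith [mul_nonneg hc.le (mul_nonneg ht0 ht0),
        mul_nonneg (sub_nonneg.mpr hcb) ht0]
    · have hB1 : 1 < B := by nlinarith [sq_nonneg A]
      have h1 : B^2 - A^2 - B ≤ 1 - A^2 := by nlinarith
      have h2 : (B^2-A^2-B)^2 ≤ (1-A^2)^2 := by nlinarith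
      have h3 : (1-A)*(1+A)^2 ≤ 32/27 := by
        nlinarith [mul_nonneg (sq_nonneg (A-1/3)) (by linarith : (0:ℝ) ≤ A+5/3)]
      have h4 : (1-A^2)^2 < 4*(B^2-A^2)*(1-A) := by
        nlinarith [mul_le_mul_of_nonneg_left h3 (by linarith : (0:ℝ) ≤ 1-A),
          mul_pos (by linarith : (0:ℝ) < 1-A) (by nlinarith : (0:ℝ) < 4*(B^2-A^2) - 32/27)]
      by_contra hcon
      push_neg at hcon
      nlinarith [sq_nonneg (2*(B^2-A^2)*t - (B^2-A^2-B)), h2, h4,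
        mul_nonneg hc.le (neg_nonneg.mpr hcon)]
end

section
/- Let p₁, p₂ : [a,b] → ℝ be integrable functions and τ₁, τ₂ ∈ [a,b]. The Cauchy problem x'(t) = p₁(t)·x(τ₁) + p₂(t)·x(τ₂) for a.e. t ∈ [a,b], x(a) = 0, has a nontrivial absolutely continuous solution if and only if the 2×2 linear system C₁ = C₁·∫ₐ^{τ₁} p₁ + C₂·∫ₐ^{τ₁} p₂, C₂ = C₁·∫ₐ^{τ₂} p₁ + C₂·∫ₐ^{τ₂} p₂ has a nontrivial solution (C₁, C₂), i.e., if and only if (1 − ∫ₐ^{τ₁} p₁)(1 − ∫ₐ^{τ₂} p₂) − (∫ₐ^{τ₁} p₂)(∫ₐ^{τ₂} p₁) = 0. -/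
/-!
A solution is determined by its two values `x τ₁, x τ₂`: it equals
`x τ₁ * ∫ₐᵗ p₁ + x τ₂ * ∫ₐᵗ p₂`. Evaluating at `τ₁, τ₂` shows that these values are a fixed
point `C = A C` of the 2×2 system with `A = (∫ₐ^{τᵢ} pⱼ)ᵢⱼ`, and conversely each fixed point
defines a solution, so nontrivial solutions exist iff `det (I - A) = 0`.
-/

open MeasureTheory intervalIntegral

theorem exists_ne_zero_fixedPoint_fin_two_iff {K : Type*} [Field K] (a₁₁ a₁₂ a₂₁ a₂₂ : K) :
    (∃ c₁ c₂ : K, (c₁ ≠ 0 ∨ c₂ ≠ 0) ∧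
        c₁ = c₁ * a₁₁ + c₂ * a₁₂ ∧ c₂ = c₁ * a₂₁ + c₂ * a₂₂) ↔
      (1 - a₁₁) * (1 - a₂₂) - a₁₂ * a₂₁ = 0 := by
  set M : Matrix (Fin 2) (Fin 2) K := !![1 - a₁₁, -a₁₂; -a₂₁, 1 - a₂₂]
  have hdet : M.det = (1 - a₁₁) * (1 - a₂₂) - a₁₂ * a₂₁ := by
    rw [Matrix.det_fin_two_of]; ring
  have hfix (c : Fin 2 → K) : M.mulVec c = 0 ↔
      c 0 = c 0 * a₁₁ + c 1 * a₁₂ ∧ c 1 = c 0 * a₂₁ + c 1 * a₂₂ := by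
    simp only [funext_iff, Fin.forall_fin_two, Matrix.mulVec, dotProduct, Fin.sum_univ_two, M,
      Matrix.of_apply, Matrix.cons_val', Matrix.cons_val_zero, Matrix.cons_val_fin_one,
      Matrix.cons_val_one, neg_mul, Pi.zero_apply]
    constructor <;> rintro ⟨h₁, h₂⟩ <;> exact ⟨by linear_combination h₁, by linear_combination h₂⟩
  rw [← hdet, ← Matrix.exists_mulVec_eq_zero_iff]
  constructor
  · rintro ⟨c₁, c₂, hne, hc⟩
    exact ⟨![c₁, c₂], by simpa [funext_iff, or_iff_not_imp_left] using hne, (hfix _).2 hc⟩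
  · rintro ⟨c, hne, hc⟩
    exact ⟨c 0, c 1, by simpa [funext_iff, or_iff_not_imp_left] using hne, (hfix c).1 hc⟩

theorem MeasureTheory.IntegrableOn.intervalIntegrable_of_mem_Icc {E : Type*}
    [NormedAddCommGroup E] {f : ℝ → E} {μ : Measure ℝ} {a b t : ℝ}
    (hf : IntegrableOn f (Set.Icc a b) μ) (ht : t ∈ Set.Icc a b) :
    IntervalIntegrable f μ a t :=
  (hf.mono_set <| by
    rw [Set.uIcc_of_le ht.1]; exact Set.Icc_subset_Icc_right ht.2).intervalIntegrable

theorem intervalIntegral.integral_mul_const_add_mul_const {f g : ℝ → ℝ} {μ : Measure ℝ}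
    {a t : ℝ} (hf : IntervalIntegrable f μ a t) (hg : IntervalIntegrable g μ a t) (c d : ℝ) :
    ∫ s in a..t, (f s * c + g s * d) ∂μ = c * (∫ s in a..t, f s ∂μ) + d * ∫ s in a..t, g s ∂μ := by
  rw [integral_add (hf.mul_const c) (hg.mul_const d), intervalIntegral.integral_mul_const,
    intervalIntegral.integral_mul_const]
  ring

theorem stmt_9_general (a b : ℝ) (p₁ p₂ : ℝ → ℝ)
    (hp₁ : IntegrableOn p₁ (Set.Icc a b)) (hp₂ : IntegrableOn p₂ (Set.Icc a b))
    (τ₁ τ₂ : ℝ) (hτ₁ : τ₁ ∈ Set.Icc a b) (hτ₂ : τ₂ ∈ Set.Icc a b) :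
    (∃ x : ℝ → ℝ,
        (∀ t ∈ Set.Icc a b,
          x t = ∫ s in a..t, (p₁ s * x τ₁ + p₂ s * x τ₂)) ∧
        ¬ ∀ t ∈ Set.Icc a b, x t = 0)
    ↔ (1 - ∫ s in a..τ₁, p₁ s) * (1 - ∫ s in a..τ₂, p₂ s)
        - (∫ s in a..τ₁, p₂ s) * (∫ s in a..τ₂, p₁ s) = 0 := by
  set P₁ : ℝ → ℝ := fun t => ∫ s in a..t, p₁ s
  set P₂ : ℝ → ℝ := fun t => ∫ s in a..t, p₂ s
  have expand (c₁ c₂ : ℝ) {t : ℝ} (ht : t ∈ Set.Icc a b) :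
      ∫ s in a..t, (p₁ s * c₁ + p₂ s * c₂) = c₁ * P₁ t + c₂ * P₂ t :=
    integral_mul_const_add_mul_const (hp₁.intervalIntegrable_of_mem_Icc ht)
      (hp₂.intervalIntegrable_of_mem_Icc ht) c₁ c₂
  rw [← exists_ne_zero_fixedPoint_fin_two_iff]
  constructor
  · rintro ⟨x, hx, hne⟩
    have hxP : ∀ t ∈ Set.Icc a b, x t = x τ₁ * P₁ t + x τ₂ * P₂ t :=
      fun t ht => (hx t ht).trans (expand _ _ ht)
    refine ⟨x τ₁, x τ₂, ?_, hxP τ₁ hτ₁, hxP τ₂ hτ₂⟩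
    by_contra! hzero
    exact hne fun t ht => by rw [hxP t ht, hzero.1, hzero.2]; ring
  · rintro ⟨c₁, c₂, hne, hc₁, hc₂⟩
    refine ⟨fun t => c₁ * P₁ t + c₂ * P₂ t, fun t ht => ?_, fun hzero => ?_⟩
    · beta_reduce
      rw [← hc₁, ← hc₂, expand c₁ c₂ ht]
    · exact hne.elim (· (hc₁.trans (hzero τ₁ hτ₁))) (· (hc₂.trans (hzero τ₂ hτ₂)))

/-- The Cauchy problem `x' = p₁ x(τ₁) + p₂ x(τ₂)` a.e., `x(a) = 0`
(equivalently, its integral formulation) has a nontrivial absolutely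
continuous solution iff the determinant of the associated 2×2 system
vanishes. -/
theorem stmt_9 (a b : ℝ) (hab : a < b) (p₁ p₂ : ℝ → ℝ)
    (hp₁ : IntegrableOn p₁ (Set.Icc a b)) (hp₂ : IntegrableOn p₂ (Set.Icc a b))
    (τ₁ τ₂ : ℝ) (hτ₁ : τ₁ ∈ Set.Icc a b) (hτ₂ : τ₂ ∈ Set.Icc a b) :
    (∃ x : ℝ → ℝ,
        (∀ t ∈ Set.Icc a b,
          x t = ∫ s in a..t, (p₁ s * x τ₁ + p₂ s * x τ₂)) ∧
        ¬ ∀ t ∈ Set.Icc a b, x t = 0)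
    ↔ (1 - ∫ s in a..τ₁, p₁ s) * (1 - ∫ s in a..τ₂, p₂ s)
        - (∫ s in a..τ₁, p₂ s) * (∫ s in a..τ₂, p₁ s) = 0 :=
  stmt_9_general a b p₁ p₂ hp₁ hp₂ τ₁ τ₂ hτ₁ hτ₂
end

section
/- Let A, B ≥ 0 and suppose (B² − A²)t² + (A² − B² + B)t + 1 − A > 0 for all t ∈ [0,1]. Then A < 1 and B < 3. -/
lemma nine_mul_eval_one_third (A B : ℝ) :
    9 * ((B^2 - A^2) * (1/3)^2 + (A^2 - B^2 + B) * (1/3) + 1 - A)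
      = A * (2 * A - 9) - (2 * B + 3) * (B - 3) := by
  ring

theorem stmt_18_general (A B : ℝ) (hA : 0 ≤ A)
    (h : ∀ t ∈ Set.Icc (0:ℝ) 1,
      0 < (B^2 - A^2) * t^2 + (A^2 - B^2 + B) * t + 1 - A) :
    A < 1 ∧ B < 3 := by
  have hA1 : A < 1 := by simpa using h 0 ⟨le_rfl, zero_le_one⟩
  refine ⟨hA1, ?_⟩
  have h3 := nine_mul_eval_one_third A B ▸
    mul_pos (by norm_num : (0:ℝ) < 9) (h (1/3) ⟨by norm_num, by norm_num⟩)
  by_contra! hB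
  have hA9 : A * (2 * A - 9) ≤ 0 := mul_nonpos_of_nonneg_of_nonpos hA (by linarith)
  have hB3 : 0 ≤ (2 * B + 3) * (B - 3) := mul_nonneg (by linarith) (by linarith)
  linarith

theorem stmt_18 (A B : ℝ) (hA : 0 ≤ A) (hB : 0 ≤ B)
    (h : ∀ t ∈ Set.Icc (0:ℝ) 1,
      0 < (B^2 - A^2) * t^2 + (A^2 - B^2 + B) * t + 1 - A) :
    A < 1 ∧ B < 3 :=
  stmt_18_general A B hA h
end
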